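/- arXiv:2411.19132 — 5 statements merged into one kernel-verified Lean document; each statement's English description precedes it below -/
import Mathlib

section
/- Let k ≥ 1 be an integer, θ ∈ (0,1), and set p = ⌈(k+1)(1−θ)⌉, assuming p ≤ k. Let R⁽⁰⁾, R⁽¹⁾, …, R⁽ᵏ⁾ be independent and identically distributed real-valued random variables on a probability space (Ω, 𝔽, Pr). Then Pr{ R⁽⁰⁾ ≤ C } ≥ 1 − θ, where C(ω) is the p-th smallest value among R⁽¹⁾(ω), …, R⁽ᵏ⁾(ω). -/
/-!
Write `strictRank v j` for the number of coordinates of `v` strictly below `v j`. The event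
`R 0 ≤ C` says exactly that `R 0` has strict rank `< p` among `R 0, …, R k`. For every outcome at
least `p` of the `k + 1` indices have strict rank `< p`, so the probabilities of these `k + 1`
events sum to at least `p`. The law of an i.i.d. vector is invariant under permuting coordinates,
so all these events have the same probability, whence
`(k + 1) Pr{R 0 ≤ C} ≥ p ≥ (k + 1)(1 - θ)`.
-/

open MeasureTheory ProbabilityTheory

/-- The `p`-th smallest value (1-indexed) among `v 0, …, v (k-1)`:
the `p`-th entry of the list sorted in nondecreasing order. -/
noncomputable def pthSmallest {k : ℕ} (p : ℕ) (v : Fin k → ℝ) : ℝ :=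
  ((List.ofFn v).mergeSort (· ≤ ·)).getD (p - 1) 0

open scoped Finset ENNReal

theorem List.Pairwise.le_getElem_iff_countP_lt_le {α : Type*} [LinearOrder α] {l : List α}
    (hl : l.Pairwise (· ≤ ·)) {m : ℕ} (hm : m < l.length) (x : α) :
    x ≤ l[m] ↔ l.countP (· < x) ≤ m := by
  induction l generalizing m with
  | nil => simp at hm
  | cons a t ih =>
    rw [List.pairwise_cons] at hl
    have hcount (hxa : x ≤ a) : t.countP (· < x) = 0 :=
      List.countP_eq_zero.2 fun b hb => by simpa using hxa.trans (hl.1 b hb)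
    cases m with
    | zero => by_cases hxa : x ≤ a <;> simp [List.countP_cons, hxa, hcount]
    | succ m =>
      rw [List.getElem_cons_succ, List.countP_cons, ih hl.2]
      by_cases hxa : x ≤ a
      · simp [hcount hxa, not_lt.2 hxa]
      · simp [not_le.1 hxa]

theorem List.countP_ofFn_eq_card_filter {α : Type*} {n : ℕ} (v : Fin n → α) (P : α → Prop)
    [DecidablePred P] : (List.ofFn v).countP (P ·) = #{i | P (v i)} := by
  rw [← Multiset.coe_countP, ← Fin.univ_val_map, Multiset.countP_map]
  simp [Finset.card_def, Finset.filter_val]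

theorem le_pthSmallest_iff {k p : ℕ} (hp : 0 < p) (hpk : p ≤ k) (v : Fin k → ℝ) (x : ℝ) :
    x ≤ pthSmallest p v ↔ #{i | v i < x} < p := by
  have hm : p - 1 < ((List.ofFn v).mergeSort (· ≤ ·)).length := by
    rw [List.length_mergeSort, List.length_ofFn]; omega
  rw [pthSmallest, List.getD_eq_getElem _ _ hm,
    (List.pairwise_mergeSort' _ _).le_getElem_iff_countP_lt_le hm,
    (List.mergeSort_perm _ _).countP_eq, List.countP_ofFn_eq_card_filter v (· < x)]
  omega

section StrictRank

variable {ι α : Type*} [Fintype ι] [LinearOrder α]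

def strictRank (v : ι → α) (j : ι) : ℕ :=
  #{i | v i < v j}

theorem strictRank_comp_perm (v : ι → α) (σ : Equiv.Perm ι) (j : ι) :
    strictRank (v ∘ σ) j = strictRank v (σ j) :=
  Finset.card_equiv σ (by simp)

theorem le_card_strictRank_lt (v : ι → α) {p : ℕ} (hp : p ≤ Fintype.card ι) :
    p ≤ #{j | strictRank v j < p} := by
  classical
  set S : Finset ι := {j | strictRank v j < p}
  by_contra! hS
  have hne : Sᶜ.Nonempty := by
    rw [← Finset.card_pos, Finset.card_compl]; omega
  -- a value-minimal index outside `S` has all strictly smaller indices inside `S`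
  obtain ⟨j, hjS, hmin⟩ := Sᶜ.exists_min_image v hne
  have hsub : ({i | v i < v j} : Finset ι) ⊆ S := fun i hi => by
    by_contra hiS
    simp only [Finset.mem_filter, Finset.mem_univ, true_and] at hi
    exact (hmin i (Finset.mem_compl.2 hiS)).not_gt hi
  have hj : strictRank v j < p := (Finset.card_le_card hsub).trans_lt hS
  exact Finset.mem_compl.1 hjS (by simpa [S] using hj)

theorem measurable_strictRank [TopologicalSpace α] [OrderClosedTopology α]
    [SecondCountableTopology α] [MeasurableSpace α] [OpensMeasurableSpace α] (j : ι) :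
    Measurable fun v : ι → α => strictRank v j := by
  classical
  simp only [strictRank, Finset.card_filter]
  exact Finset.measurable_sum _ fun i _ => Measurable.ite
    (measurableSet_lt (measurable_pi_apply i) (measurable_pi_apply j))
    measurable_const measurable_const

end StrictRank

section IID

variable {Ω : Type*} [MeasurableSpace Ω] {μ : Measure Ω}

open Classical in
theorem natCast_mul_measure_univ_le_sum {ι : Type*} [Fintype ι] {A : ι → Set Ω}
    (hA : ∀ j, MeasurableSet (A j)) {p : ℕ} (h : ∀ ω, p ≤ #{j | ω ∈ A j}) :
    (p : ℝ≥0∞) * μ Set.univ ≤ ∑ j, μ (A j) :=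
  calc (p : ℝ≥0∞) * μ Set.univ = ∫⁻ _, (p : ℝ≥0∞) ∂μ := (lintegral_const _).symm
    _ ≤ ∫⁻ ω, ∑ j, (A j).indicator (fun _ => 1) ω ∂μ := lintegral_mono fun ω => by
      simpa [Set.indicator_apply, Finset.sum_boole] using h ω
    _ = ∑ j, μ (A j) := by
      rw [lintegral_finsetSum _ fun j _ => measurable_const.indicator (hA j)]
      simp [hA]

theorem map_comp_perm_eq_of_iIndepFun {ι α : Type*} [Fintype ι] [MeasurableSpace α]
    {R : ι → Ω → α} (hmeas : ∀ i, AEMeasurable (R i) μ) (hindep : iIndepFun R μ)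
    (hident : ∀ i j, μ.map (R i) = μ.map (R j)) (σ : Equiv.Perm ι) :
    μ.map (fun ω i => R (σ i) ω) = μ.map (fun ω i => R i ω) := by
  rw [(hindep.precomp σ.injective).map_fun_eq_pi_map fun i => hmeas (σ i),
    hindep.map_fun_eq_pi_map hmeas]
  congr 1 with i : 1
  exact hident _ _

theorem measure_strictRank_lt_eq {ι α : Type*} [Fintype ι] [LinearOrder α] [TopologicalSpace α]
    [OrderClosedTopology α] [SecondCountableTopology α] [MeasurableSpace α] [OpensMeasurableSpace α]
    {R : ι → Ω → α} (hmeas : ∀ i, Measurable (R i)) (hindep : iIndepFun R μ)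
    (hident : ∀ i j, μ.map (R i) = μ.map (R j)) (p : ℕ) (i j : ι) :
    μ {ω | strictRank (R · ω) i < p} = μ {ω | strictRank (R · ω) j < p} := by
  classical
  set B := {v : ι → α | strictRank v j < p}
  have hB : MeasurableSet B := measurableSet_lt (measurable_strictRank j) measurable_const
  have hswap : {ω | strictRank (R · ω) i < p} = (fun ω l => R (Equiv.swap i j l) ω) ⁻¹' B := by
    ext ω
    change _ ↔ strictRank ((R · ω) ∘ Equiv.swap i j) j < p
    rw [strictRank_comp_perm, Equiv.swap_apply_right]
    rfl
  rw [hswap, ← Measure.map_apply (measurable_pi_lambda _ fun l => hmeas _) hB,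
    map_comp_perm_eq_of_iIndepFun (fun i => (hmeas i).aemeasurable) hindep hident,
    Measure.map_apply (measurable_pi_lambda _ hmeas) hB]
  rfl

theorem div_le_measure_le_pthSmallest [IsProbabilityMeasure μ] {k p : ℕ} (hpk : p ≤ k)
    {R : Fin (k + 1) → Ω → ℝ} (hmeas : ∀ i, Measurable (R i)) (hindep : iIndepFun R μ)
    (hident : ∀ i j, μ.map (R i) = μ.map (R j)) :
    (p : ℝ≥0∞) / (k + 1) ≤ μ {ω | R 0 ω ≤ pthSmallest p fun i : Fin k => R i.succ ω} := by
  rcases p.eq_zero_or_pos with rfl | hp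
  · simp
  have hE : {ω | R 0 ω ≤ pthSmallest p fun i : Fin k => R i.succ ω} =
      {ω | strictRank (R · ω) 0 < p} := by
    ext ω
    simp [le_pthSmallest_iff hp hpk, strictRank, Fin.card_filter_univ_succ]
  have hmeasE (j : Fin (k + 1)) : MeasurableSet {ω | strictRank (R · ω) j < p} :=
    (measurable_strictRank j).comp (measurable_pi_lambda _ hmeas) measurableSet_Iio
  rw [hE, ENNReal.div_le_iff (by simp) (by simp)]
  calc (p : ℝ≥0∞) = p * μ Set.univ := by simp
    _ ≤ ∑ j, μ {ω | strictRank (R · ω) j < p} :=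
      natCast_mul_measure_univ_le_sum hmeasE fun ω => by
        simpa using le_card_strictRank_lt (R · ω) (p := p) (by rw [Fintype.card_fin]; omega)
    _ = ∑ _ : Fin (k + 1), μ {ω | strictRank (R · ω) 0 < p} :=
      Finset.sum_congr rfl fun j _ => measure_strictRank_lt_eq hmeas hindep hident p j 0
    _ = μ {ω | strictRank (R · ω) 0 < p} * (k + 1) := by simp [mul_comm]

end IID

theorem conformal_quantile_lemma_general
    {Ω : Type*} [MeasurableSpace Ω] (μ : Measure Ω) [IsProbabilityMeasure μ]
    (k : ℕ) (θ : ℝ)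
    (p : ℕ) (hp : (p : ℤ) = ⌈((k : ℝ) + 1) * (1 - θ)⌉) (hpk : p ≤ k)
    (R : Fin (k + 1) → Ω → ℝ)
    (hmeas : ∀ i, Measurable (R i))
    (hindep : iIndepFun R μ)
    (hident : ∀ i j, μ.map (R i) = μ.map (R j)) :
    μ {ω | R 0 ω ≤ pthSmallest p (fun i : Fin k => R i.succ ω)} ≥
      ENNReal.ofReal (1 - θ) := by
  have hceil : ((k : ℝ) + 1) * (1 - θ) ≤ p := by exact_mod_cast hp ▸ Int.le_ceil _
  calc ENNReal.ofReal (1 - θ) ≤ ENNReal.ofReal (p / (k + 1)) :=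
        ENNReal.ofReal_le_ofReal (by rw [le_div_iff₀ (by positivity)]; linarith)
    _ = (p : ℝ≥0∞) / (k + 1) := by
        rw [ENNReal.ofReal_div_of_pos (by positivity), ← Nat.cast_add_one, ENNReal.ofReal_natCast,
          ENNReal.ofReal_natCast, Nat.cast_add_one]
    _ ≤ _ := div_le_measure_le_pthSmallest hpk hmeas hindep hident

/-- **Conformal prediction quantile lemma** (Lemma 1): if `R 0, R 1, …, R k` are i.i.d.
real-valued random variables, `θ ∈ (0,1)` and `p = ⌈(k+1)(1-θ)⌉ ≤ k`, then
`Pr{R 0 ≤ C} ≥ 1 - θ`, where `C(ω)` is the `p`-th smallest value among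
`R 1 ω, …, R k ω`. -/
theorem conformal_quantile_lemma
    {Ω : Type*} [MeasurableSpace Ω] (μ : Measure Ω) [IsProbabilityMeasure μ]
    (k : ℕ) (hk : 1 ≤ k) (θ : ℝ) (hθ : θ ∈ Set.Ioo (0 : ℝ) 1)
    (p : ℕ) (hp : (p : ℤ) = ⌈((k : ℝ) + 1) * (1 - θ)⌉) (hpk : p ≤ k)
    (R : Fin (k + 1) → Ω → ℝ)
    (hmeas : ∀ i, Measurable (R i))
    (hindep : iIndepFun R μ)
    (hident : ∀ i j, μ.map (R i) = μ.map (R j)) :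
    μ {ω | R 0 ω ≤ pthSmallest p (fun i : Fin k => R i.succ ω)} ≥
      ENNReal.ofReal (1 - θ) :=
  conformal_quantile_lemma_general μ k θ p hp hpk R hmeas hindep hident
end

section
/- Let A ∈ ℝ^{n×n}, B ∈ ℝ^{n×m}, K ∈ ℝ^{m×n}, θ ∈ (0,1), and N ≥ 1. Let 𝒳_t ⊆ ℝⁿ (t = 1,…,N), 𝒰 ⊆ ℝᵐ, E ⊆ ℝⁿ, E_u ⊆ ℝᵐ be sets. Let x₀ ∈ ℝⁿ and let z(0) = x₀, v(0), …, v(N−1) be deterministic vectors with z(t+1) = A z(t) + B v(t), z(t) ∈ 𝒳_t ⊖ E for all t ∈ {1,…,N}, and v(t) ∈ 𝒰 ⊖ E_u for all t ∈ {0,…,N−1}. On a probability space (Ω, 𝔽, Pr), let w(0), …, w(N−1) be ℝⁿ-valued random vectors, define x(0) = x₀, u(t) = K (x(t) − z(t)) + v(t), x(t+1) = A x(t) + B u(t) + w(t), and e(t) = x(t) − z(t). If Pr{ e(t) ∈ E for all t ∈ {1,…,N} } ≥ 1 − θ and Pr{ K e(t) ∈ E_u for all t ∈ {0,…,N−1}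 } ≥ 1 − θ, then Pr{ x(t) ∈ 𝒳_t for all t ∈ {1,…,N} } ≥ 1 − θ and Pr{ u(t) ∈ 𝒰 for all t ∈ {0,…,N−1} } ≥ 1 − θ. -/
open MeasureTheory Matrix

/-- The Pontryagin set difference `S₁ ⊖ S₂ = {s ｜ s + s₂ ∈ S₁ for all s₂ ∈ S₂}`. -/
def pontryaginDiff {V : Type*} [Add V] (S₁ S₂ : Set V) : Set V :=
  {s | ∀ s₂ ∈ S₂, s + s₂ ∈ S₁}

theorem measure_forall_mem_le_of_mem_pontryaginDiff {ι Ω V : Type*} [MeasurableSpace Ω] [Add V]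
    (μ : Measure Ω) (p : ι → Prop) (S T : ι → Set V) (c : ι → V) (d y : ι → Ω → V)
    (hc : ∀ i, p i → c i ∈ pontryaginDiff (S i) (T i)) (hy : ∀ i ω, y i ω = c i + d i ω) :
    μ {ω | ∀ i, p i → d i ω ∈ T i} ≤ μ {ω | ∀ i, p i → y i ω ∈ S i} :=
  measure_mono fun ω hd i hi => hy i ω ▸ hc i hi _ (hd i hi)

theorem feasible_solution_chance_constraints_general {n m : ℕ} {Ω : Type*} [MeasurableSpace Ω]
    (μ : Measure Ω)
    (K : Matrix (Fin m) (Fin n) ℝ)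
    (θ : ℝ) (N : ℕ)
    (X : ℕ → Set (Fin n → ℝ)) (U : Set (Fin m → ℝ))
    (E : Set (Fin n → ℝ)) (Eu : Set (Fin m → ℝ))
    (z : ℕ → Fin n → ℝ) (v : ℕ → Fin m → ℝ)
    (hzX : ∀ t ∈ Finset.Icc 1 N, z t ∈ pontryaginDiff (X t) E)
    (hvU : ∀ t < N, v t ∈ pontryaginDiff U Eu)
    (x : ℕ → Ω → Fin n → ℝ) (u : ℕ → Ω → Fin m → ℝ) (e : ℕ → Ω → Fin n → ℝ)
    (hu : ∀ t ω, u t ω = K.mulVec (x t ω - z t) + v t)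
    (he : ∀ t ω, e t ω = x t ω - z t)
    (hePR : μ {ω | ∀ t ∈ Finset.Icc 1 N, e t ω ∈ E} ≥ ENNReal.ofReal (1 - θ))
    (hKePR : μ {ω | ∀ t < N, K.mulVec (e t ω) ∈ Eu} ≥ ENNReal.ofReal (1 - θ)) :
    μ {ω | ∀ t ∈ Finset.Icc 1 N, x t ω ∈ X t} ≥ ENNReal.ofReal (1 - θ) ∧
    μ {ω | ∀ t < N, u t ω ∈ U} ≥ ENNReal.ofReal (1 - θ) := by
  have hx : ∀ t ω, x t ω = z t + e t ω := fun t ω => by rw [he, add_sub_cancel]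
  have hu' : ∀ t ω, u t ω = v t + K.mulVec (e t ω) := fun t ω => by rw [hu, he, add_comm]
  exact ⟨hePR.trans (measure_forall_mem_le_of_mem_pontryaginDiff μ _ X (fun _ => E) z e x hzX hx),
    hKePR.trans (measure_forall_mem_le_of_mem_pontryaginDiff μ _ (fun _ => U) (fun _ => Eu) v
      (fun t ω => K.mulVec (e t ω)) u hvU hu')⟩

/-- **Theorem 1**: given a feasible solution `(v, z)` of the deterministic tightened problem,
the control `u(t) = K e(t) + v(t)`, with `e(t) = x(t) − z(t)`, yields state and input
trajectories of `x(t+1) = A x(t) + B u(t) + w(t)` satisfying the joint chance constraints. -/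
theorem feasible_solution_chance_constraints {n m : ℕ} {Ω : Type*} [MeasurableSpace Ω]
    (μ : Measure Ω) [IsProbabilityMeasure μ]
    (A : Matrix (Fin n) (Fin n) ℝ) (B : Matrix (Fin n) (Fin m) ℝ)
    (K : Matrix (Fin m) (Fin n) ℝ)
    (θ : ℝ) (hθ : θ ∈ Set.Ioo (0 : ℝ) 1) (N : ℕ) (hN : 1 ≤ N)
    (X : ℕ → Set (Fin n → ℝ)) (U : Set (Fin m → ℝ))
    (E : Set (Fin n → ℝ)) (Eu : Set (Fin m → ℝ))
    (x₀ : Fin n → ℝ) (z : ℕ → Fin n → ℝ) (v : ℕ → Fin m → ℝ)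
    (hz0 : z 0 = x₀)
    (hzdyn : ∀ t < N, z (t + 1) = A.mulVec (z t) + B.mulVec (v t))
    (hzX : ∀ t ∈ Finset.Icc 1 N, z t ∈ pontryaginDiff (X t) E)
    (hvU : ∀ t < N, v t ∈ pontryaginDiff U Eu)
    (w x : ℕ → Ω → Fin n → ℝ) (u : ℕ → Ω → Fin m → ℝ) (e : ℕ → Ω → Fin n → ℝ)
    (hx0 : ∀ ω, x 0 ω = x₀)
    (hu : ∀ t ω, u t ω = K.mulVec (x t ω - z t) + v t)
    (hxdyn : ∀ t < N, ∀ ω, x (t + 1) ω = A.mulVec (x t ω) + B.mulVec (u t ω) + w t ω)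
    (he : ∀ t ω, e t ω = x t ω - z t)
    (hePR : μ {ω | ∀ t ∈ Finset.Icc 1 N, e t ω ∈ E} ≥ ENNReal.ofReal (1 - θ))
    (hKePR : μ {ω | ∀ t < N, K.mulVec (e t ω) ∈ Eu} ≥ ENNReal.ofReal (1 - θ)) :
    μ {ω | ∀ t ∈ Finset.Icc 1 N, x t ω ∈ X t} ≥ ENNReal.ofReal (1 - θ) ∧
    μ {ω | ∀ t < N, u t ω ∈ U} ≥ ENNReal.ofReal (1 - θ) :=
  feasible_solution_chance_constraints_general μ K θ N X U E Eu z v hzX hvU x u e hu he hePR hKePR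
end

section
/- Let Φ, Y ∈ ℝ^{n×n} be symmetric positive definite, Ā ∈ ℝ^{n×n}, and λ₀, λ₁ ≥ 0 with λ₀ + λ₁ ≤ 1. If the block matrix M = [[λ₀ Φ − Āᵀ Φ Ā, −Āᵀ Φ], [−Φ Ā, λ₁ Y − Φ]] ∈ ℝ^{2n×2n} is positive semidefinite, then for all e, w ∈ ℝⁿ with eᵀ Φ e ≤ 1 and wᵀ Y w ≤ 1, it holds that (Ā e + w)ᵀ Φ (Ā e + w) ≤ 1. -/
open Matrix

namespace Matrix

variable {n R : Type*} [Fintype n] [CommRing R]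

theorem dotProduct_transpose_mul_mulVec (A P : Matrix n n R) (u v : n → R) :
    u ⬝ᵥ (Aᵀ * P) *ᵥ v = A *ᵥ u ⬝ᵥ P *ᵥ v := by
  rw [← mulVec_mulVec, dotProduct_mulVec, vecMul_transpose]

theorem sumElim_dotProduct_fromBlocks_mulVec_sumElim (P Q A : Matrix n n R) (a b : R)
    (e w : n → R) :
    Sum.elim e w ⬝ᵥ fromBlocks (a • P - Aᵀ * P * A) (-(Aᵀ * P)) (-(P * A)) (b • Q - P) *ᵥ
        Sum.elim e w =
      a * (e ⬝ᵥ P *ᵥ e) + b * (w ⬝ᵥ Q *ᵥ w) - (A *ᵥ e + w) ⬝ᵥ P *ᵥ (A *ᵥ e + w) := by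
  rw [fromBlocks_mulVec, sumElim_dotProduct_sumElim]
  simp only [Sum.elim_comp_inl, Sum.elim_comp_inr, sub_mulVec, smul_mulVec, neg_mulVec,
    dotProduct_add, dotProduct_sub, dotProduct_neg, dotProduct_smul, smul_eq_mul]
  rw [← mulVec_mulVec (v := e), dotProduct_transpose_mul_mulVec, dotProduct_transpose_mul_mulVec,
    ← mulVec_mulVec]
  simp only [mulVec_add, dotProduct_add, add_dotProduct]
  ring

end Matrix

theorem s_procedure_invariance_general {n : ℕ} (Φ Y Abar : Matrix (Fin n) (Fin n) ℝ)
    (lam₀ lam₁ : ℝ) (hlam₀ : 0 ≤ lam₀) (hlam₁ : 0 ≤ lam₁)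
    (hsum : lam₀ + lam₁ ≤ 1)
    (hM : (Matrix.fromBlocks (lam₀ • Φ - Abarᵀ * Φ * Abar) (-(Abarᵀ * Φ))
      (-(Φ * Abar)) (lam₁ • Y - Φ)).PosSemidef) :
    ∀ e w : Fin n → ℝ, e ⬝ᵥ Φ.mulVec e ≤ 1 → w ⬝ᵥ Y.mulVec w ≤ 1 →
      (Abar.mulVec e + w) ⬝ᵥ Φ.mulVec (Abar.mulVec e + w) ≤ 1 := by
  intro e w he hw
  have hq := hM.dotProduct_mulVec_nonneg (Sum.elim e w)
  rw [star_trivial, sumElim_dotProduct_fromBlocks_mulVec_sumElim] at hq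
  linarith [mul_le_mul_of_nonneg_left he hlam₀, mul_le_mul_of_nonneg_left hw hlam₁]

/-- **S-procedure sufficiency**: if the block matrix
`[[λ₀Φ − ĀᵀΦĀ, −ĀᵀΦ], [−ΦĀ, λ₁Y − Φ]]` is positive semidefinite with `λ₀, λ₁ ≥ 0`,
`λ₀ + λ₁ ≤ 1`, then the ellipsoid `{e ｜ eᵀΦe ≤ 1}` is robustly invariant for
`e⁺ = Āe + w` under all disturbances `w` with `wᵀYw ≤ 1`. -/
theorem s_procedure_invariance {n : ℕ} (Φ Y Abar : Matrix (Fin n) (Fin n) ℝ)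
    (hΦ : Φ.PosDef) (hY : Y.PosDef) (lam₀ lam₁ : ℝ) (hlam₀ : 0 ≤ lam₀) (hlam₁ : 0 ≤ lam₁)
    (hsum : lam₀ + lam₁ ≤ 1)
    (hM : (Matrix.fromBlocks (lam₀ • Φ - Abarᵀ * Φ * Abar) (-(Abarᵀ * Φ))
      (-(Φ * Abar)) (lam₁ • Y - Φ)).PosSemidef) :
    ∀ e w : Fin n → ℝ, e ⬝ᵥ Φ.mulVec e ≤ 1 → w ⬝ᵥ Y.mulVec w ≤ 1 →
      (Abar.mulVec e + w) ⬝ᵥ Φ.mulVec (Abar.mulVec e + w) ≤ 1 :=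
  s_procedure_invariance_general Φ Y Abar lam₀ lam₁ hlam₀ hlam₁ hsum hM
end

section
/- Let A ∈ ℝ^{n×n}, B ∈ ℝ^{n×m}, let Φ̂, Y ∈ ℝ^{n×n} be symmetric positive definite, Ψ ∈ ℝ^{m×n}, and λ₀ > 0, λ₁ > 0. If the block matrix [[Φ̂ − (1/λ₁) Y⁻¹, A Φ̂ + B Ψ], [(A Φ̂ + B Ψ)ᵀ, λ₀ Φ̂]] is positive semidefinite, then, setting Φ = Φ̂⁻¹, K = Ψ Φ̂⁻¹, and Ā = A + B K, the block matrix [[λ₀ Φ − Āᵀ Φ Ā, −Āᵀ Φ], [−Φ Ā, λ₁ Y − Φ]] is positive semidefinite. -/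
/-!
With `Φ = Φ̂⁻¹`, `Ā = A + BK` and `W = λ₁⁻¹Y⁻¹` one has `AΦ̂ + BΨ = ĀΦ̂` and `λ₁Y = W⁻¹`, and the
bilinear matrix `T = [[λ₀Φ − ĀᵀΦĀ, −ĀᵀΦ], [−ΦĀ, W⁻¹ − Φ]]` splits as `SᵀHS + DᵀWD`, where `H` is
the linearized block matrix, `S = [[−ΦĀ, −Φ], [Φ, 0]]` and `D = [−ΦĀ, W⁻¹ − Φ]`. Both summands
are congruence transforms of the positive semidefinite matrices `H` and `W`.
-/

open Matrix

variable {ι : Type*} [Fintype ι] [DecidableEq ι]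

theorem fromBlocks_bmi_eq_congr_add {R : Type*} [CommRing R] {P Φ W V Abar : Matrix ι ι R}
    (c : R) (hPΦ : P * Φ = 1) (hWV : W * V = 1) (hP : Pᵀ = P) (hΦ : Φᵀ = Φ) (hV : Vᵀ = V) :
    fromBlocks (c • Φ - Abarᵀ * Φ * Abar) (-(Abarᵀ * Φ)) (-(Φ * Abar)) (V - Φ) =
      (fromBlocks (-(Φ * Abar)) (-Φ) Φ 0)ᵀ *
          fromBlocks (P - W) (Abar * P) (Abar * P)ᵀ (c • P) *
          fromBlocks (-(Φ * Abar)) (-Φ) Φ 0 +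
        (fromCols (-(Φ * Abar)) (V - Φ))ᵀ * W * fromCols (-(Φ * Abar)) (V - Φ) := by
  have hΦP : Φ * P = 1 := mul_eq_one_comm.mp hPΦ
  have hVW : V * W = 1 := mul_eq_one_comm.mp hWV
  have hΦP_mul (X : Matrix ι ι R) : Φ * (P * X) = X := by rw [← Matrix.mul_assoc, hΦP, one_mul]
  have hVW_mul (X : Matrix ι ι R) : V * (W * X) = X := by rw [← Matrix.mul_assoc, hVW, one_mul]
  rw [fromBlocks_transpose, transpose_fromCols, fromBlocks_multiply, fromBlocks_multiply,
    Matrix.mul_assoc (fromRows _ _), mul_fromCols, fromRows_mul_fromCols, fromBlocks_add,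
    fromBlocks_inj]
  refine ⟨?_, ?_, ?_, ?_⟩ <;>
  simp only [transpose_neg, transpose_mul, transpose_zero, transpose_sub, hP, hΦ, hV,
    add_mul, mul_sub, sub_mul, mul_neg, neg_mul, neg_neg, mul_smul_comm, smul_mul_assoc,
    Matrix.mul_assoc, hΦP_mul, hVW_mul, hΦP, hPΦ, hWV, mul_one, one_mul, Matrix.mul_zero,
    Matrix.zero_mul, smul_zero, add_zero] <;>
  abel

theorem posSemidef_bmi_of_lmi {P W Abar : Matrix ι ι ℝ} (c : ℝ) (hP : P.PosDef) (hW : W.PosDef)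
    (h : (fromBlocks (P - W) (Abar * P) (Abar * P)ᵀ (c • P)).PosSemidef) :
    (fromBlocks (c • P⁻¹ - Abarᵀ * P⁻¹ * Abar) (-(Abarᵀ * P⁻¹)) (-(P⁻¹ * Abar))
      (W⁻¹ - P⁻¹)).PosSemidef := by
  have symm {M : Matrix ι ι ℝ} (hM : M.PosDef) : Mᵀ = M :=
    (isHermitian_iff_isSymm.mp hM.isHermitian).eq
  rw [fromBlocks_bmi_eq_congr_add c (mul_nonsing_inv P hP.det_pos.ne'.isUnit)
    (mul_nonsing_inv W hW.det_pos.ne'.isUnit) (symm hP) (symm hP.inv) (symm hW.inv)]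
  simpa only [conjTranspose_eq_transpose_of_trivial] using
    (h.conjTranspose_mul_mul_same _).add (hW.posSemidef.conjTranspose_mul_mul_same _)

theorem schur_linearization_general {n m : ℕ}
    (A : Matrix (Fin n) (Fin n) ℝ) (B : Matrix (Fin n) (Fin m) ℝ)
    (Phat Y : Matrix (Fin n) (Fin n) ℝ) (hPhat : Phat.PosDef) (hY : Y.PosDef)
    (Ψ : Matrix (Fin m) (Fin n) ℝ) (lam₀ lam₁ : ℝ) (hlam₁ : 0 < lam₁)
    (h : (Matrix.fromBlocks (Phat - lam₁⁻¹ • Y⁻¹) (A * Phat + B * Ψ)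
      (A * Phat + B * Ψ)ᵀ (lam₀ • Phat)).PosSemidef) :
    (Matrix.fromBlocks
      (lam₀ • Phat⁻¹ - (A + B * (Ψ * Phat⁻¹))ᵀ * Phat⁻¹ * (A + B * (Ψ * Phat⁻¹)))
      (-((A + B * (Ψ * Phat⁻¹))ᵀ * Phat⁻¹))
      (-(Phat⁻¹ * (A + B * (Ψ * Phat⁻¹))))
      (lam₁ • Y - Phat⁻¹)).PosSemidef := by
  have hAbar : A * Phat + B * Ψ = (A + B * (Ψ * Phat⁻¹)) * Phat := by
    rw [add_mul, Matrix.mul_assoc B, Matrix.mul_assoc Ψ,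
      nonsing_inv_mul _ hPhat.det_pos.ne'.isUnit, Matrix.mul_one]
  have hW_inv : (lam₁⁻¹ • Y⁻¹)⁻¹ = lam₁ • Y := by
    refine inv_eq_left_inv ?_
    rw [smul_mul_smul_comm, mul_inv_cancel₀ hlam₁.ne', mul_nonsing_inv _ hY.det_pos.ne'.isUnit,
      one_smul]
  rw [hAbar] at h
  simpa only [hW_inv] using posSemidef_bmi_of_lmi lam₀ hPhat (hY.inv.smul (inv_pos.mpr hlam₁)) h

/-- **Schur-complement linearization**: positive semidefiniteness of the linearized block
matrix `[[Φ̂ − (1/λ₁)Y⁻¹, AΦ̂ + BΨ], [(AΦ̂ + BΨ)ᵀ, λ₀Φ̂]]` implies positive semidefiniteness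
of the bilinear matrix inequality `[[λ₀Φ − ĀᵀΦĀ, −ĀᵀΦ], [−ΦĀ, λ₁Y − Φ]]`, where
`Φ = Φ̂⁻¹`, `K = ΨΦ̂⁻¹` and `Ā = A + BK`. -/
theorem schur_linearization {n m : ℕ}
    (A : Matrix (Fin n) (Fin n) ℝ) (B : Matrix (Fin n) (Fin m) ℝ)
    (Phat Y : Matrix (Fin n) (Fin n) ℝ) (hPhat : Phat.PosDef) (hY : Y.PosDef)
    (Ψ : Matrix (Fin m) (Fin n) ℝ) (lam₀ lam₁ : ℝ) (hlam₀ : 0 < lam₀) (hlam₁ : 0 < lam₁)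
    (h : (Matrix.fromBlocks (Phat - lam₁⁻¹ • Y⁻¹) (A * Phat + B * Ψ)
      (A * Phat + B * Ψ)ᵀ (lam₀ • Phat)).PosSemidef) :
    (Matrix.fromBlocks
      (lam₀ • Phat⁻¹ - (A + B * (Ψ * Phat⁻¹))ᵀ * Phat⁻¹ * (A + B * (Ψ * Phat⁻¹)))
      (-((A + B * (Ψ * Phat⁻¹))ᵀ * Phat⁻¹))
      (-(Phat⁻¹ * (A + B * (Ψ * Phat⁻¹))))
      (lam₁ • Y - Phat⁻¹)).PosSemidef :=
  schur_linearization_general A B Phat Y hPhat hY Ψ lam₀ lam₁ hlam₁ h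
end

section
/- Let Φ̂ ∈ ℝ^{n×n} and Q ∈ ℝ^{m×m} be symmetric positive definite, Ψ ∈ ℝ^{m×n}, and let Q^{1/2} denote the unique symmetric positive definite square root of Q. If the block matrix [[Φ̂, Ψᵀ Q^{1/2}], [Q^{1/2} Ψ, I_m]] is positive definite, then, setting Φ = Φ̂⁻¹ and K = Ψ Φ̂⁻¹, for every e ∈ ℝⁿ with eᵀ Φ e ≤ 1 it holds that (K e)ᵀ Q (K e) < 1; in particular the set ℰ_u = { K e : eᵀ Φ e ≤ 1 } is contained in the interior of 𝒰 = { u ∈ ℝᵐ : uᵀ Q u ≤ 1 }. -/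
/-! The LMI says, by a Schur complement with respect to its identity block and
`Q = Q^{1/2} Q^{1/2}`, that `Φ̂ - Ψᵀ Q Ψ` is positive definite. Substituting `a = Φ̂⁻¹ e` turns
`(K e)ᵀ Q (K e)` into `aᵀ Ψᵀ Q Ψ a` and `eᵀ Φ e` into `aᵀ Φ̂ a`, so the former is strictly
smaller than the latter whenever `e ≠ 0`. The strict inequality puts `ℰ_u` inside the open set
`{u | uᵀ Q u < 1}`. -/

open Matrix

/-- The square root of a positive semidefinite matrix, as defined in the older Mathlib
(removed since; restated here with its old definition). -/
noncomputable def Matrix.PosSemidef.sqrt {n 𝕜 : Type*} [Fintype n] [RCLike 𝕜] [PartialOrder 𝕜]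
    [StarOrderedRing 𝕜] [DecidableEq n]
    {A : Matrix n n 𝕜} (hA : A.PosSemidef) : Matrix n n 𝕜 :=
  hA.1.eigenvectorUnitary.1 * diagonal ((↑) ∘ (√·) ∘ hA.1.eigenvalues) *
    (star hA.1.eigenvectorUnitary : Matrix n n 𝕜)

namespace Matrix

namespace PosSemidef

variable {n 𝕜 : Type*} [Fintype n] [RCLike 𝕜] [DecidableEq n] {A : Matrix n n 𝕜}

theorem isHermitian_sqrt [PartialOrder 𝕜] [StarOrderedRing 𝕜] (hA : A.PosSemidef) :
    hA.sqrt.IsHermitian := by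
  refine isHermitian_mul_mul_conjTranspose _ (isHermitian_diagonal_of_self_adjoint _ ?_)
  ext i
  simp

open scoped ComplexOrder in
theorem sqrt_mul_self (hA : A.PosSemidef) : hA.sqrt * hA.sqrt = A := by
  have hU : (star hA.1.eigenvectorUnitary : Matrix n n 𝕜) * hA.1.eigenvectorUnitary = 1 :=
    Unitary.coe_star_mul_self _
  conv_rhs => rw [hA.1.spectral_theorem, Unitary.conjStarAlgAut_apply]
  simp only [sqrt, Matrix.mul_assoc, ← Matrix.mul_assoc (star _ : Matrix n n 𝕜), hU,
    Matrix.one_mul]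
  rw [← Matrix.mul_assoc (diagonal _), diagonal_mul_diagonal]
  congr 3
  funext i
  simp only [Function.comp_apply, ← RCLike.ofReal_mul,
    Real.mul_self_sqrt (hA.eigenvalues_nonneg i)]

end PosSemidef

variable {m n R : Type*} [Fintype m] [Fintype n] [CommRing R] [PartialOrder R] [StarRing R]

theorem PosDef.schur_complement₂₂ [DecidableEq n] {A : Matrix m m R} {B : Matrix m n R}
    {D : Matrix n n R} [Invertible D] (hD : D.IsHermitian)
    (h : (fromBlocks A B Bᴴ D).PosDef) : (A - B * D⁻¹ * Bᴴ).PosDef := by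
  refine .of_dotProduct_mulVec_pos ((IsHermitian.fromBlocks₂₂ A B hD).mp h.1) fun x hx => ?_
  -- the test vector that annihilates the first summand of `schur_complement_eq₂₂`
  have hxy : x ⊕ᵥ (-((D⁻¹ * Bᴴ) *ᵥ x)) ≠ 0 := fun h0 => hx (funext fun i => congrFun h0 (.inl i))
  have := h.dotProduct_mulVec_pos hxy
  rwa [dotProduct_mulVec, schur_complement_eq₂₂ A B _ _ hD, add_neg_cancel, star_zero,
    zero_vecMul, zero_dotProduct, zero_add, ← dotProduct_mulVec] at this

theorem dotProduct_mulVec_lt_of_posDef_sub [IsOrderedRing R] {A B : Matrix n n R}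
    (h : (A - B).PosDef) {x : n → R} (hx : x ≠ 0) :
    star x ⬝ᵥ (B *ᵥ x) < star x ⬝ᵥ (A *ᵥ x) := by
  simpa [sub_mulVec, dotProduct_sub] using h.dotProduct_mulVec_pos hx

omit [PartialOrder R] [StarRing R] in
theorem mulVec_dotProduct_mulVec_mulVec (M : Matrix m n R) (Q : Matrix m m R) (a : n → R) :
    M *ᵥ a ⬝ᵥ Q *ᵥ (M *ᵥ a) = a ⬝ᵥ (Mᵀ * Q * M) *ᵥ a := by
  rw [← mulVec_mulVec, ← mulVec_mulVec, dotProduct_mulVec a, vecMul_transpose]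

theorem quadForm_mul_inv_lt_one_of_posDef_sub [DecidableEq n] {P : Matrix n n ℝ}
    (hP : IsUnit P.det) {M : Matrix m n ℝ} {Q : Matrix m m ℝ} (h : (P - Mᵀ * Q * M).PosDef)
    (e : n → ℝ) (he : e ⬝ᵥ P⁻¹ *ᵥ e ≤ 1) : (M * P⁻¹) *ᵥ e ⬝ᵥ Q *ᵥ ((M * P⁻¹) *ᵥ e) < 1 := by
  rw [← mulVec_mulVec (M := M), mulVec_dotProduct_mulVec_mulVec]
  set a := P⁻¹ *ᵥ e
  have hPa : a ⬝ᵥ P *ᵥ a = e ⬝ᵥ a := by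
    rw [mulVec_mulVec, mul_nonsing_inv _ hP, one_mulVec, dotProduct_comm]
  rcases eq_or_ne a 0 with ha | ha
  · rw [ha, zero_dotProduct]
    exact one_pos
  · exact (dotProduct_mulVec_lt_of_posDef_sub h ha).trans_le (hPa ▸ he)

end Matrix

/-- **Input admissibility (LMI (14))**: if the block matrix
`[[Φ̂, ΨᵀQ^{1/2}], [Q^{1/2}Ψ, I]]` is positive definite (with `Q^{1/2}` the unique
symmetric positive definite square root of `Q`), then with `Φ = Φ̂⁻¹` and `K = ΨΦ̂⁻¹`,
every `e` with `eᵀΦe ≤ 1` satisfies `(Ke)ᵀQ(Ke) < 1`; in particular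
`ℰ_u = {Ke ｜ eᵀΦe ≤ 1}` is contained in the interior of `𝒰 = {u ｜ uᵀQu ≤ 1}`. -/
theorem input_admissibility {n m : ℕ}
    (Phat : Matrix (Fin n) (Fin n) ℝ) (hPhat : Phat.PosDef)
    (Q : Matrix (Fin m) (Fin m) ℝ) (hQ : Q.PosDef) (Ψ : Matrix (Fin m) (Fin n) ℝ)
    (h : (Matrix.fromBlocks Phat (Ψᵀ * hQ.posSemidef.sqrt) (hQ.posSemidef.sqrt * Ψ)
      (1 : Matrix (Fin m) (Fin m) ℝ)).PosDef) :
    (∀ e : Fin n → ℝ, e ⬝ᵥ Phat⁻¹.mulVec e ≤ 1 →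
      ((Ψ * Phat⁻¹).mulVec e) ⬝ᵥ Q.mulVec ((Ψ * Phat⁻¹).mulVec e) < 1) ∧
    {u : Fin m → ℝ | ∃ e : Fin n → ℝ, e ⬝ᵥ Phat⁻¹.mulVec e ≤ 1 ∧
        u = (Ψ * Phat⁻¹).mulVec e} ⊆
      interior {u : Fin m → ℝ | u ⬝ᵥ Q.mulVec u ≤ 1} := by
  set S := hQ.posSemidef.sqrt
  have hSS : S * S = Q := hQ.posSemidef.sqrt_mul_self
  have hB : (Ψᵀ * S)ᴴ = S * Ψ := by
    rw [conjTranspose_mul, hQ.posSemidef.isHermitian_sqrt.eq,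
      conjTranspose_eq_transpose_of_trivial, transpose_transpose]
  have hschur : (Phat - Ψᵀ * Q * Ψ).PosDef := by
    have : Invertible (1 : Matrix (Fin m) (Fin m) ℝ) := invertibleOne
    have hcompl : Ψᵀ * S * (1 : Matrix (Fin m) (Fin m) ℝ)⁻¹ * (Ψᵀ * S)ᴴ = Ψᵀ * Q * Ψ := by
      rw [inv_one, Matrix.mul_one, hB, ← hSS]
      simp only [Matrix.mul_assoc]
    rw [← hB] at h
    exact hcompl ▸ h.schur_complement₂₂ isHermitian_one
  have hbound := fun e => quadForm_mul_inv_lt_one_of_posDef_sub hPhat.det_pos.ne'.isUnit hschur e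
  refine ⟨hbound, ?_⟩
  rintro _ ⟨e, he, rfl⟩
  exact lt_subset_interior_le (by fun_prop) continuous_const (hbound e he)
end
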